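/- arXiv:2007.00196 — 2 statements merged into one kernel-verified Lean document; each statement's English description precedes it below -/
import Mathlib

section
/- Let g ≥ 1 and let A_1, …, A_g, B_1, …, B_g be elements of SU(2) satisfying ∏_{j=1}^g [A_j, B_j] = -I, where [A,B] = A B A⁻¹ B⁻¹. If h ∈ SU(2) satisfies h A_j h⁻¹ = A_j and h B_j h⁻¹ = B_j for all j = 1, …, g, then h = I or h = -I. (Equivalently, the stabilizer of any point of M_g = μ⁻¹(-I) under the conjugation action of SU(2) is exactly the center {±I}, so the induced action of SO(3) = SU(2)/{±I} on M_g is free.) -/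
/-!
A matrix `H ∈ SU(2)` fixing every `Aⱼ, Bⱼ` under conjugation commutes with all of them.
If `H` is not scalar, its centralizer in `M₂(ℂ)` is commutative: modulo scalars a `2 × 2`
matrix is a vector of `ℂ³`, the commutator of two matrices is the cross product of these
vectors, and everything commuting with `H` is then parallel to the (nonzero) vector of `H`.
So each `[Aⱼ, Bⱼ] = I`, contradicting `∏ⱼ [Aⱼ, Bⱼ] = -I`. Hence `H` is scalar, and
`det H = 1` forces `H = ±I`.
-/

open Matrix
open scoped commutatorElement

/-- `SU2` is the special unitary group of 2×2 complex matrices: the subgroup of the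
unitary group `Matrix.unitaryGroup (Fin 2) ℂ` consisting of matrices of determinant 1. -/
def SU2 : Subgroup (Matrix.unitaryGroup (Fin 2) ℂ) where
  carrier := {A | Matrix.det (A : Matrix (Fin 2) (Fin 2) ℂ) = 1}
  one_mem' := by simp
  mul_mem' := by
    intro a b ha hb
    simp only [Set.mem_setOf_eq] at *
    rw [Submonoid.coe_mul, Matrix.det_mul, ha, hb, one_mul]
  inv_mem' := by
    intro a ha
    simp only [Set.mem_setOf_eq] at *
    have h1 : ((a⁻¹ : Matrix.unitaryGroup (Fin 2) ℂ) : Matrix (Fin 2) (Fin 2) ℂ)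
        = star (a : Matrix (Fin 2) (Fin 2) ℂ) := rfl
    rw [h1]
    change Matrix.det ((a : Matrix (Fin 2) (Fin 2) ℂ)ᴴ) = 1
    rw [Matrix.det_conjTranspose, ha, star_one]

namespace Matrix

theorem exists_smul_eq_of_cross_eq_zero {F : Type*} [Field F] {v u : Fin 3 → F}
    (hv : v ≠ 0) (h : v ⨯₃ u = 0) : ∃ a : F, a • v = u := by
  by_contra hne
  push Not at hne
  exact crossProduct_ne_zero_iff_linearIndependent.mpr ((LinearIndependent.pair_iff' hv).mpr hne) h

theorem cross_eq_zero_of_cross_eq_zero {F : Type*} [Field F] {v u w : Fin 3 → F}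
    (hv : v ≠ 0) (hu : v ⨯₃ u = 0) (hw : v ⨯₃ w = 0) : u ⨯₃ w = 0 := by
  obtain ⟨a, rfl⟩ := exists_smul_eq_of_cross_eq_zero hv hu
  obtain ⟨b, rfl⟩ := exists_smul_eq_of_cross_eq_zero hv hw
  simp only [map_smul, LinearMap.smul_apply, cross_self, smul_zero]

section FinTwo

variable {R : Type*} [CommRing R]

/-- Coordinates of a `2 × 2` matrix modulo the scalar matrices. -/
def modScalar (M : Matrix (Fin 2) (Fin 2) R) : Fin 3 → R := ![M 0 0 - M 1 1, M 0 1, M 1 0]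

theorem commute_iff_modScalar_cross_eq_zero {M N : Matrix (Fin 2) (Fin 2) R} :
    Commute M N ↔ modScalar M ⨯₃ modScalar N = 0 := by
  simp only [Commute, SemiconjBy, ← Matrix.ext_iff, Fin.forall_fin_two, mul_apply,
    Fin.sum_univ_two, cross_apply, modScalar, cons_eq_zero_iff, zero_empty, and_true,
    cons_val_zero, cons_val_one, cons_val_two, head_cons, tail_cons]
  constructor
  · rintro ⟨⟨h00, h01⟩, h10, -⟩
    exact ⟨by linear_combination h00, by linear_combination h10, by linear_combination h01⟩
  · rintro ⟨h0, h1, h2⟩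
    exact ⟨⟨by linear_combination h0, by linear_combination h2⟩,
      by linear_combination h1, by linear_combination -h0⟩

theorem eq_scalar_of_modScalar_eq_zero {M : Matrix (Fin 2) (Fin 2) R} (h : modScalar M = 0) :
    M = scalar (Fin 2) (M 0 0) := by
  simp only [modScalar, cons_eq_zero_iff, zero_empty, sub_eq_zero] at h
  ext i j
  fin_cases i <;> fin_cases j <;> simp [h]

end FinTwo

theorem commute_of_commute_of_modScalar_ne_zero {F : Type*} [Field F]
    {H M N : Matrix (Fin 2) (Fin 2) F} (hH : modScalar H ≠ 0) (hM : Commute H M)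
    (hN : Commute H N) : Commute M N :=
  commute_iff_modScalar_cross_eq_zero.mpr <| cross_eq_zero_of_cross_eq_zero hH
    (commute_iff_modScalar_cross_eq_zero.mp hM) (commute_iff_modScalar_cross_eq_zero.mp hN)

end Matrix

namespace SU2

theorem det_coe (x : SU2) : (x : Matrix (Fin 2) (Fin 2) ℂ).det = 1 := x.2

theorem commute_coe_iff {x y : SU2} :
    Commute (x : Matrix (Fin 2) (Fin 2) ℂ) y ↔ Commute x y := by
  simp only [Commute, SemiconjBy, Subtype.ext_iff]
  rfl

theorem coe_eq_one_or_neg_one_of_eq_scalar {x : SU2} {c : ℂ}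
    (hx : (x : Matrix (Fin 2) (Fin 2) ℂ) = scalar (Fin 2) c) :
    (x : Matrix (Fin 2) (Fin 2) ℂ) = 1 ∨ (x : Matrix (Fin 2) (Fin 2) ℂ) = -1 := by
  have hc : c ^ 2 = 1 := by simpa [hx, sq] using det_coe x
  rcases sq_eq_one_iff.mp hc with rfl | rfl <;> simp only [hx, map_one, map_neg, true_or, or_true]

end SU2

theorem stabilizer_of_relation_is_center_general
    (g : ℕ) (A B : Fin g → SU2) (h : SU2)
    (hrel : (((List.ofFn fun j => ⁅A j, B j⁆).prod : SU2) : Matrix (Fin 2) (Fin 2) ℂ) = -1)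
    (hA : ∀ j, h * A j * h⁻¹ = A j) (hB : ∀ j, h * B j * h⁻¹ = B j) :
    (h : Matrix (Fin 2) (Fin 2) ℂ) = 1 ∨ (h : Matrix (Fin 2) (Fin 2) ℂ) = -1 := by
  by_cases hscalar : modScalar (h : Matrix (Fin 2) (Fin 2) ℂ) = 0
  · exact SU2.coe_eq_one_or_neg_one_of_eq_scalar (eq_scalar_of_modScalar_eq_zero hscalar)
  have hcomm (j : Fin g) : Commute (A j) (B j) :=
    SU2.commute_coe_iff.mp <| commute_of_commute_of_modScalar_ne_zero hscalar
      (SU2.commute_coe_iff.mpr (mul_inv_eq_iff_eq_mul.mp (hA j)))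
      (SU2.commute_coe_iff.mpr (mul_inv_eq_iff_eq_mul.mp (hB j)))
  have hprod : (List.ofFn fun j => ⁅A j, B j⁆).prod = 1 :=
    List.prod_eq_one <| by simp [commutatorElement_eq_one_iff_commute.mpr (hcomm _)]
  rw [hprod, OneMemClass.coe_one, OneMemClass.coe_one] at hrel
  exact absurd (congrFun (congrFun hrel 0) 0) (by norm_num)

/-- If `A₁, …, A_g, B₁, …, B_g ∈ SU(2)` satisfy `∏ⱼ [Aⱼ, Bⱼ] = -I`, then any `h ∈ SU(2)`
that commutes with all of them (i.e. `h Aⱼ h⁻¹ = Aⱼ` and `h Bⱼ h⁻¹ = Bⱼ` for all `j`)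
satisfies `h = I` or `h = -I`: the stabilizer is exactly the center `{±I}`,
so the induced `SO(3)`-action on `M_g = μ⁻¹(-I)` is free. -/
theorem stabilizer_of_relation_is_center
    (g : ℕ) (hg : 1 ≤ g) (A B : Fin g → SU2) (h : SU2)
    (hrel : (((List.ofFn fun j => ⁅A j, B j⁆).prod : SU2) : Matrix (Fin 2) (Fin 2) ℂ) = -1)
    (hA : ∀ j, h * A j * h⁻¹ = A j) (hB : ∀ j, h * B j * h⁻¹ = B j) :
    (h : Matrix (Fin 2) (Fin 2) ℂ) = 1 ∨ (h : Matrix (Fin 2) (Fin 2) ℂ) = -1 :=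
  stabilizer_of_relation_is_center_general g A B h hrel hA hB
end

section
/- If x, y ∈ SU(2) satisfy x y x⁻¹ y⁻¹ = -I, then tr(x) = 0 and tr(y) = 0. -/
open Matrix

theorem mul_eq_neg_mul_of_commutator_eq_neg_one {G : Type*} [Group G] [HasDistribNeg G] {x y : G}
    (h : x * y * x⁻¹ * y⁻¹ = -1) : x * y = -(y * x) := by
  calc x * y = x * y * x⁻¹ * y⁻¹ * (y * x) := by group
    _ = -(y * x) := by rw [h, neg_one_mul]

theorem Matrix.trace_eq_zero_of_mul_eq_neg_mul {n R : Type*} [Fintype n] [DecidableEq n] [CommRing R]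
    [IsAddTorsionFree R] {A B : Matrix n n R} (hB : IsUnit B) (h : A * B = -(B * A)) :
    trace A = 0 := by
  obtain ⟨u, rfl⟩ := hB
  have hconj : (u : Matrix n n R) * A * u⁻¹.val = -A := by
    rw [← neg_neg ((u : Matrix n n R) * A), ← h, neg_mul, mul_assoc, Units.mul_inv, mul_one]
  refine self_eq_neg.mp ?_
  calc trace A = trace ((u : Matrix n n R) * A * u⁻¹.val) := by
        rw [trace_mul_cycle, Units.inv_mul, one_mul]
    _ = -trace A := by rw [hconj, trace_neg]

/-- If `x, y ∈ SU(2)` satisfy `x y x⁻¹ y⁻¹ = -I`, then `tr(x) = 0` and `tr(y) = 0`. -/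
theorem trace_eq_zero_of_commutator_eq_neg_one
    (x y : SU2)
    (hxy : ((x * y * x⁻¹ * y⁻¹ : SU2) : Matrix (Fin 2) (Fin 2) ℂ) = -1) :
    Matrix.trace (x : Matrix (Fin 2) (Fin 2) ℂ) = 0 ∧
      Matrix.trace (y : Matrix (Fin 2) (Fin 2) ℂ) = 0 := by
  have hanti := congrArg Subtype.val
    (mul_eq_neg_mul_of_commutator_eq_neg_one (x := x.val) (y := y.val) (Subtype.ext hxy))
  simp only [Submonoid.coe_mul, Unitary.coe_neg] at hanti
  exact ⟨trace_eq_zero_of_mul_eq_neg_mul Unitary.isUnit_coe hanti,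
    trace_eq_zero_of_mul_eq_neg_mul Unitary.isUnit_coe (by rw [hanti, neg_neg])⟩
end
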